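/- arXiv:2503.12940 — 3 statements merged into one kernel-verified Lean document; each statement's English description precedes it below -/
import Mathlib

section
/- Let X be a reflexive Banach space. Then every closed subspace of X is the kernel of some bounded operator X → X if and only if every closed subspace of X* is the closure of the image of some bounded operator X* → X*. -/
/-!
In a reflexive space, the annihilator `Y ↦ Y^⊥` and the pre-annihilator `Z ↦ ⊥Z` are mutually
inverse bijections between closed subspaces of `X` and of `X*` (Hahn–Banach), and
`ker T = ⊥(range T*)` for every operator `T`. Hence `T ↦ T*` turns a kernel `Y` into an operator
whose range has closure `Y^⊥`; conversely, by reflexivity every operator on `X*` is an adjoint `T*`.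
-/

open NormedSpace

namespace StrongDual

variable {𝕜 E F : Type*} [RCLike 𝕜] [NormedAddCommGroup E] [NormedSpace 𝕜 E]
  [NormedAddCommGroup F] [NormedSpace 𝕜 F]

theorem exists_mem_polarSubmodule_apply_ne_zero {M : Submodule 𝕜 E}
    (hM : IsClosed (M : Set E)) {x : E} (hx : x ∉ M) :
    ∃ f ∈ polarSubmodule 𝕜 M, f x ≠ 0 := by
  -- makes `E ⧸ M` a normed (Hausdorff) space, which its dual separates
  have := hM
  obtain ⟨g, hg⟩ := SeparatingDual.exists_ne_zero (R := 𝕜) (x := M.mkQ x)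
    (by simpa [Submodule.Quotient.mk_eq_zero] using hx)
  refine ⟨g ∘L M.mkQL, (mem_polarSubmodule 𝕜 M _).2 fun m hm => ?_, hg⟩
  simp [(Submodule.Quotient.mk_eq_zero M).2 hm]

theorem isClosed_polarSubmodule (Y : Submodule 𝕜 E) :
    IsClosed (polarSubmodule 𝕜 Y : Set (StrongDual 𝕜 E)) := by
  have : (polarSubmodule 𝕜 Y : Set (StrongDual 𝕜 E)) = ⋂ y ∈ Y, {f | f y = 0} := by
    ext f
    simp [mem_polarSubmodule]
  rw [this]
  exact isClosed_biInter fun y _ =>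
    isClosed_eq (inclusionInDoubleDual 𝕜 E y).continuous continuous_const

def preannihilator (Z : Submodule 𝕜 (StrongDual 𝕜 E)) : Submodule 𝕜 E :=
  (topDualPairing 𝕜 E).polarSubmodule Z

theorem mem_preannihilator {Z : Submodule 𝕜 (StrongDual 𝕜 E)} {x : E} :
    x ∈ preannihilator Z ↔ ∀ f ∈ Z, f x = 0 :=
  Set.ext_iff.1 ((topDualPairing 𝕜 E).polar_subMulAction Z) x

theorem isClosed_preannihilator (Z : Submodule 𝕜 (StrongDual 𝕜 E)) :
    IsClosed (preannihilator Z : Set E) := by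
  have : (preannihilator Z : Set E) = ⋂ f ∈ Z, f ⁻¹' {0} := by
    ext x
    simp [mem_preannihilator]
  rw [this]
  exact isClosed_biInter fun f _ => isClosed_singleton.preimage f.continuous

theorem preannihilator_topologicalClosure (Z : Submodule 𝕜 (StrongDual 𝕜 E)) :
    preannihilator Z.topologicalClosure = preannihilator Z := by
  ext x
  refine ⟨fun hx => mem_preannihilator.2 fun f hf => mem_preannihilator.1 hx f
    (Z.le_topologicalClosure hf), fun hx => mem_preannihilator.2 fun f hf => ?_⟩
  have hclosed : IsClosed {g : StrongDual 𝕜 E | g x = 0} :=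
    isClosed_eq (inclusionInDoubleDual 𝕜 E x).continuous continuous_const
  exact closure_minimal (fun g hg => mem_preannihilator.1 hx g hg) hclosed hf

theorem preannihilator_polarSubmodule {Y : Submodule 𝕜 E} (hY : IsClosed (Y : Set E)) :
    preannihilator (polarSubmodule 𝕜 Y) = Y := by
  ext x
  refine ⟨fun hx => ?_, fun hx => mem_preannihilator.2 fun f hf =>
    (mem_polarSubmodule 𝕜 Y f).1 hf x hx⟩
  by_contra hxY
  obtain ⟨f, hf, hfx⟩ := exists_mem_polarSubmodule_apply_ne_zero hY hxY
  exact hfx (mem_preannihilator.1 hx f hf)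

theorem polarSubmodule_preannihilator (hE : Function.Surjective (inclusionInDoubleDual 𝕜 E))
    (Z : Submodule 𝕜 (StrongDual 𝕜 E)) :
    polarSubmodule 𝕜 (preannihilator Z) = Z.topologicalClosure := by
  refine le_antisymm (fun g hg => ?_) (Z.topologicalClosure_minimal
    (fun f hf => (mem_polarSubmodule 𝕜 _ f).2 fun x hx => mem_preannihilator.1 hx f hf)
    (isClosed_polarSubmodule _))
  by_contra hgZ
  obtain ⟨Φ, hΦ, hΦg⟩ :=
    exists_mem_polarSubmodule_apply_ne_zero Z.isClosed_topologicalClosure hgZ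
  obtain ⟨x, rfl⟩ := hE Φ
  have hx : x ∈ preannihilator Z := mem_preannihilator.2 fun f hf =>
    (mem_polarSubmodule 𝕜 _ _).1 hΦ f (Z.le_topologicalClosure hf)
  exact hΦg ((mem_polarSubmodule 𝕜 _ g).1 hg x hx)

noncomputable def dualMap (T : E →L[𝕜] F) : StrongDual 𝕜 F →L[𝕜] StrongDual 𝕜 E :=
  (ContinuousLinearMap.compL 𝕜 E F 𝕜).flip T

@[simp]
theorem dualMap_apply (T : E →L[𝕜] F) (f : StrongDual 𝕜 F) (x : E) :
    dualMap T f x = f (T x) :=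
  rfl

theorem ker_eq_preannihilator_range_dualMap (T : E →L[𝕜] F) :
    LinearMap.ker (T : E →ₗ[𝕜] F) = preannihilator (dualMap T).range := by
  ext x
  simp only [LinearMap.mem_ker, ContinuousLinearMap.coe_coe, mem_preannihilator,
    LinearMap.mem_range, forall_exists_index, forall_apply_eq_imp_iff, dualMap_apply]
  exact SeparatingDual.eq_zero_iff_forall_dual_eq_zero (R := 𝕜) (T x)

theorem exists_dualMap_eq (hF : Function.Surjective (inclusionInDoubleDual 𝕜 F))
    (S : StrongDual 𝕜 F →L[𝕜] StrongDual 𝕜 E) : ∃ T : E →L[𝕜] F, dualMap T = S := by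
  let e := LinearIsometryEquiv.ofSurjective (inclusionInDoubleDualLi 𝕜 (E := F)) hF
  refine ⟨(e.symm : _ →L[𝕜] F) ∘L dualMap S ∘L inclusionInDoubleDual 𝕜 E, ?_⟩
  ext f x
  -- `f (e⁻¹ Φ) = Φ f`, since `e` is evaluation
  exact congr($(e.apply_symm_apply (dualMap S (inclusionInDoubleDual 𝕜 E x))) f)

end StrongDual

theorem ContinuousLinearMap.coe_topologicalClosure_range {𝕜 E F : Type*} [RCLike 𝕜]
    [NormedAddCommGroup E] [NormedSpace 𝕜 E] [NormedAddCommGroup F] [NormedSpace 𝕜 F]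
    (T : E →L[𝕜] F) : (T.range.topologicalClosure : Set F) = closure (Set.range T) := by
  rw [Submodule.topologicalClosure_coe, LinearMap.coe_range, ContinuousLinearMap.coe_coe]

open StrongDual in
theorem stmt0_general {𝕜 : Type*} [RCLike 𝕜] {X : Type*} [NormedAddCommGroup X] [NormedSpace 𝕜 X]
    (hrefl : Function.Surjective (inclusionInDoubleDual 𝕜 X)) :
    (∀ Y : Submodule 𝕜 X, IsClosed (Y : Set X) →
      ∃ T : X →L[𝕜] X, LinearMap.ker (T : X →ₗ[𝕜] X) = Y) ↔
    (∀ Z : Submodule 𝕜 (StrongDual 𝕜 X), IsClosed (Z : Set (StrongDual 𝕜 X)) →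
      ∃ S : StrongDual 𝕜 X →L[𝕜] StrongDual 𝕜 X, closure (Set.range S) = (Z : Set (StrongDual 𝕜 X))) := by
  constructor
  · intro h Z hZ
    obtain ⟨T, hT⟩ := h (preannihilator Z) (isClosed_preannihilator Z)
    refine ⟨dualMap T, ?_⟩
    rw [← ContinuousLinearMap.coe_topologicalClosure_range, ← polarSubmodule_preannihilator hrefl,
      ← ker_eq_preannihilator_range_dualMap, hT, polarSubmodule_preannihilator hrefl,
      hZ.submodule_topologicalClosure_eq]
  · intro h Y hY
    obtain ⟨S, hS⟩ := h (polarSubmodule 𝕜 Y) (isClosed_polarSubmodule Y)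
    obtain ⟨T, rfl⟩ := exists_dualMap_eq hrefl S
    rw [← ContinuousLinearMap.coe_topologicalClosure_range] at hS
    refine ⟨T, ?_⟩
    rw [ker_eq_preannihilator_range_dualMap, ← preannihilator_topologicalClosure,
      SetLike.coe_injective hS, preannihilator_polarSubmodule hY]

/-- Let `X` be a reflexive Banach space. Every closed subspace of `X` is the kernel of some
bounded operator `X → X` if and only if every closed subspace of `X*` is the closure of the
image of some bounded operator `X* → X*`. -/
theorem stmt0 {𝕜 : Type*} [RCLike 𝕜] {X : Type*} [NormedAddCommGroup X] [NormedSpace 𝕜 X]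
    [CompleteSpace X]
    (hrefl : Function.Surjective (inclusionInDoubleDual 𝕜 X)) :
    (∀ Y : Submodule 𝕜 X, IsClosed (Y : Set X) →
      ∃ T : X →L[𝕜] X, LinearMap.ker (T : X →ₗ[𝕜] X) = Y) ↔
    (∀ Z : Submodule 𝕜 (StrongDual 𝕜 X), IsClosed (Z : Set (StrongDual 𝕜 X)) →
      ∃ S : StrongDual 𝕜 X →L[𝕜] StrongDual 𝕜 X, closure (Set.range S) = (Z : Set (StrongDual 𝕜 X))) :=
  stmt0_general hrefl
end

section
/- Let Γ be an uncountable set and p, q ∈ [1, ∞). There exists a bounded linear injection ℓ_p(Γ) → ℓ_q(Γ) if and only if p ≤ q. -/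
open scoped ENNReal

/-!
For `p ≤ q` the identity `ℓ_p(Γ) → ℓ_q(Γ)` is a contraction.

Conversely, let `q < p` and let `T : ℓ_p(Γ) → ℓ_q(Γ)` be injective, so that the vectors
`g_γ = T e_γ` are nonzero; uncountably many of them have norm in a fixed interval `[δ, M]`.
Fix `n` and a small `η`. Each `g_γ` carries all but `η` of its mass on a finite set `F_γ`;
uncountably many `F_γ` have the same size, so a Δ-system argument yields a sequence `γ_k` and a
finite root `R` such that the sets `F_{γ_k} \ R` are pairwise disjoint, and by compactness in the
finite-dimensional space `ℓ_q(R)` the restrictions `g_{γ_k}|_R` may be taken pairwise `η`-close.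
Each `g_{γ_k}` has mass `δ / 3` on `R` or on `F_{γ_k} \ R`. Summing `n` terms of the same kind gives
a vector of norm at least `≈ n` (the masses on `R` add up coherently) or `≈ n^{1/q}` (the masses on
the disjoint blocks add up in `ℓ_q`), whereas it is the image under `T` of a vector of norm
`n^{1/p}`. As `1/p < 1/q`, this fails for large `n`.
-/

open Filter Finset Function

section Combinatorics

variable {ι α : Type*}

theorem exists_not_countable_inter_preimage_singleton {β : Type*} [Countable β] {A : Set ι}
    (hA : ¬A.Countable) (f : ι → β) : ∃ b, ¬(A ∩ f ⁻¹' {b}).Countable := by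
  by_contra! h
  refine hA ((Set.countable_iUnion h).mono fun i hi => ?_)
  exact Set.mem_iUnion.2 ⟨f i, hi, rfl⟩

theorem exists_not_countable_forall_mem_Icc [Uncountable ι] (f : ι → ℝ) (hf : ∀ i, 0 < f i) :
    ∃ B : Set ι, ¬B.Countable ∧ ∃ δ > 0, ∃ M, ∀ i ∈ B, f i ∈ Set.Icc δ M := by
  obtain ⟨⟨m, n⟩, hB⟩ := exists_not_countable_inter_preimage_singleton Set.not_countable_univ
    fun i => (⌈f i⌉₊, ⌈(f i)⁻¹⌉₊)
  refine ⟨_, hB, (n + 1 : ℝ)⁻¹, by positivity, m, fun i ⟨_, hi⟩ => ?_⟩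
  simp only [Set.mem_preimage, Set.mem_singleton_iff, Prod.mk.injEq] at hi
  refine ⟨inv_le_of_inv_le₀ (hf i) ?_, hi.1 ▸ Nat.le_ceil _⟩
  linarith [hi.2 ▸ Nat.le_ceil (f i)⁻¹]

theorem exists_seq_pairwise_disjoint {A : Set ι} (hA : ¬A.Countable) (F : ι → Finset α)
    (hF : ∀ x, {i ∈ A | x ∈ F i}.Countable) :
    ∃ c : ℕ → ι, Injective c ∧ (∀ k, c k ∈ A) ∧
      Pairwise (Disjoint on (fun k => F (c k))) := by
  classical
  obtain ⟨c, hcA, hc⟩ := exists_seq_of_forall_finset_exists (· ∈ A)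
    (fun i j => i ≠ j ∧ Disjoint (F i) (F j)) fun s _ => by
      have hbad : (↑s ∪ ⋃ i ∈ s, ⋃ x ∈ F i, {j ∈ A | x ∈ F j} : Set ι).Countable :=
        s.countable_toSet.union <| s.countable_toSet.biUnion fun i _ =>
          (F i).countable_toSet.biUnion fun x _ => hF x
      obtain ⟨j, hjA, hj⟩ := Set.nonempty_of_not_subset fun h => hA (hbad.mono h)
      refine ⟨j, hjA, fun i hi => ⟨fun hij => hj (Or.inl (hij ▸ hi)), ?_⟩⟩
      exact disjoint_left.2 fun x hxi hxj => hj <| Or.inr <|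
        Set.mem_biUnion hi <| Set.mem_biUnion hxi ⟨hjA, hxj⟩
  refine ⟨c, fun m n hmn => ?_, hcA, fun m n hmn => ?_⟩
  · by_contra hne
    rcases Ne.lt_or_gt hne with h | h
    exacts [(hc m n h).1 hmn, (hc n m h).1 hmn.symm]
  · rcases hmn.lt_or_gt with h | h
    exacts [(hc m n h).2, (hc n m h).2.symm]

/-- A weak form of the Δ-system lemma. -/
theorem exists_seq_pairwise_disjoint_sdiff [DecidableEq α] (n : ℕ) {A : Set ι}
    (hA : ¬A.Countable) (F : ι → Finset α) (hF : ∀ i ∈ A, #(F i) ≤ n) :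
    ∃ (R : Finset α) (c : ℕ → ι), Injective c ∧ (∀ k, c k ∈ A) ∧
      Pairwise (Disjoint on (fun k => F (c k) \ R)) := by
  induction n generalizing A F with
  | zero =>
    have hF₀ : ∀ i ∈ A, F i = ∅ := fun i hi => card_eq_zero.1 (Nat.le_zero.1 (hF i hi))
    refine ⟨∅, ?_⟩
    simpa using exists_seq_pairwise_disjoint hA F fun x =>
      Set.countable_empty.mono fun i hi => by simpa [hF₀ i hi.1] using hi.2
  | succ n ih =>
    by_cases hF₁ : ∀ x, {i ∈ A | x ∈ F i}.Countable
    · exact ⟨∅, by simpa using exists_seq_pairwise_disjoint hA F hF₁⟩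
    obtain ⟨x, hx⟩ := not_forall.1 hF₁
    obtain ⟨R, c, hc, hcA, hdisj⟩ := ih hx (fun i => (F i).erase x) fun i hi => by
      have := hF i hi.1
      rw [card_erase_of_mem hi.2]
      omega
    refine ⟨insert x R, c, hc, fun k => (hcA k).1, ?_⟩
    simpa only [sdiff_insert, erase_sdiff_comm] using hdisj

end Combinatorics

theorem not_forall_mul_rpow_le_mul_rpow {a b c C : ℝ} (hc : 0 < c) (hba : b < a) :
    ¬∀ n : ℕ, c * (n : ℝ) ^ a ≤ C * (n : ℝ) ^ b := by
  intro h
  obtain ⟨n, hn₁, hn⟩ := ((eventually_ge_atTop 1).and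
    (((tendsto_rpow_atTop (sub_pos.2 hba)).comp tendsto_natCast_atTop_atTop).eventually_gt_atTop
      (C / c))).exists
  have hn₀ : (0 : ℝ) < n := by exact_mod_cast hn₁
  rw [comp_apply, div_lt_iff₀ hc] at hn
  have := h n
  rw [show (n : ℝ) ^ a = n ^ (a - b) * n ^ b by rw [← Real.rpow_add hn₀, sub_add_cancel]] at this
  nlinarith [Real.rpow_pos_of_pos hn₀ b]

theorem Real.le_add_of_rpow_le_rpow_add_rpow {p a b c : ℝ} (hp : 1 ≤ p) (ha : 0 ≤ a) (hb : 0 ≤ b)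
    (hc : 0 ≤ c) (h : a ^ p ≤ b ^ p + c ^ p) : a ≤ b + c :=
  (Real.rpow_le_rpow_iff ha (by positivity) (by linarith)).1
    (h.trans (Real.add_rpow_le_rpow_add hb hc hp))

theorem ENNReal.one_le_toReal_of_pos {p : ℝ≥0∞} [Fact (1 ≤ p)] (hp : 0 < p.toReal) :
    1 ≤ p.toReal :=
  (ENNReal.dichotomy p).resolve_left (by rintro rfl; simp at hp)

section MetricSpace

theorem exists_strictMono_forall_dist_le {X : Type*} [PseudoMetricSpace X] [ProperSpace X]
    {s : Set X} (hs : Bornology.IsBounded s) {u : ℕ → X} (hu : ∀ n, u n ∈ s) {ε : ℝ}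
    (hε : 0 < ε) : ∃ φ : ℕ → ℕ, StrictMono φ ∧ ∀ j k, dist (u (φ j)) (u (φ k)) ≤ ε := by
  obtain ⟨a, -, φ, hφ, hlim⟩ := tendsto_subseq_of_bounded hs hu
  obtain ⟨K, hK⟩ := Metric.cauchySeq_iff.1 hlim.cauchySeq ε hε
  exact ⟨fun k => φ (k + K), fun j k h => hφ (by omega),
    fun j k => (hK _ (by omega) _ (by omega)).le⟩

end MetricSpace

section NormedSpace

variable {κ E : Type*}

theorem norm_sub_sum_erase_le_norm_sum [DecidableEq κ] [SeminormedAddCommGroup E] (v : κ → E)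
    {s : Finset κ} {k : κ} (hk : k ∈ s) : ‖v k‖ - ∑ j ∈ s.erase k, ‖v j‖ ≤ ‖∑ j ∈ s, v j‖ := by
  rw [← add_sum_erase s v hk]
  linarith [norm_sub_le_norm_add (v k) (∑ j ∈ s.erase k, v j), norm_sum_le (s.erase k) v]

theorem card_mul_sub_le_norm_sum [NormedAddCommGroup E] [NormedSpace ℝ E] {s : Finset κ}
    {v : κ → E} {a η : ℝ} (ha : ∀ k ∈ s, a ≤ ‖v k‖) (hη : ∀ j ∈ s, ∀ k ∈ s, ‖v j - v k‖ ≤ η) :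
    #s * (a - η) ≤ ‖∑ k ∈ s, v k‖ := by
  obtain rfl | ⟨k₀, hk₀⟩ := s.eq_empty_or_nonempty
  · simp
  have hsplit : ∑ k ∈ s, v k = #s • v k₀ + ∑ k ∈ s, (v k - v k₀) := by
    rw [sum_sub_distrib, sum_const]
    abel
  have hdev : ‖∑ k ∈ s, (v k - v k₀)‖ ≤ #s * η :=
    (norm_sum_le _ _).trans <| by
      simpa using sum_le_card_nsmul s _ η fun k hk => hη k hk k₀ hk₀
  rw [hsplit]
  refine le_trans ?_ (norm_sub_le_norm_add _ _)
  rw [RCLike.norm_nsmul ℝ, nsmul_eq_mul]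
  nlinarith [ha k₀ hk₀, (#s).cast_nonneg (α := ℝ)]

end NormedSpace

namespace lp

variable {α : Type*} {E : α → Type*} [∀ i, NormedAddCommGroup (E i)] {p q : ℝ≥0∞}

theorem norm_le_of_exponent_le (hp : 0 < p.toReal) (hq : q ≠ ∞) (hpq : p ≤ q) (f : lp E p)
    (g : lp E q) (hfg : ∀ i, f i = g i) : ‖g‖ ≤ ‖f‖ := by
  have hq₀ : 0 < q.toReal := hp.trans_le (ENNReal.toReal_mono hq hpq)
  have hpq' : p.toReal ≤ q.toReal := ENNReal.toReal_mono hq hpq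
  have hp₀ : p ≠ 0 := fun h => by simp [h] at hp
  refine norm_le_of_forall_sum_le hq₀ (norm_nonneg' f) fun s => ?_
  have hsplit : ∀ x : ℝ, 0 ≤ x → x ^ q.toReal = x ^ p.toReal * x ^ (q.toReal - p.toReal) := by
    intro x hx
    rw [← Real.rpow_add' hx (by linarith), add_sub_cancel]
  calc ∑ i ∈ s, ‖g i‖ ^ q.toReal
      ≤ ∑ i ∈ s, ‖f i‖ ^ p.toReal * ‖f‖ ^ (q.toReal - p.toReal) := by
        refine sum_le_sum fun i _ => ?_
        rw [← hfg i, hsplit _ (norm_nonneg _)]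
        exact mul_le_mul_of_nonneg_left (Real.rpow_le_rpow (norm_nonneg _)
          (norm_apply_le_norm hp₀ f i) (by linarith)) (Real.rpow_nonneg (norm_nonneg _) _)
    _ ≤ ‖f‖ ^ p.toReal * ‖f‖ ^ (q.toReal - p.toReal) := by
        rw [← sum_mul]
        exact mul_le_mul_of_nonneg_right (sum_rpow_le_norm_rpow hp f s)
          (Real.rpow_nonneg (norm_nonneg' f) _)
    _ = ‖f‖ ^ q.toReal := (hsplit _ (norm_nonneg' f)).symm

theorem norm_linearMapOfLE_le {𝕜 : Type*} [NormedRing 𝕜] [∀ i, Module 𝕜 (E i)]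
    [∀ i, IsBoundedSMul 𝕜 (E i)] (hp : 0 < p.toReal) (hq : q ≠ ∞) (hpq : p ≤ q) (f : lp E p) :
    ‖linearMapOfLE 𝕜 E hpq f‖ ≤ ‖f‖ :=
  norm_le_of_exponent_le hp hq hpq f _ fun _ => rfl

theorem linearMapOfLE_injective {𝕜 : Type*} [NormedRing 𝕜] [∀ i, Module 𝕜 (E i)]
    [∀ i, IsBoundedSMul 𝕜 (E i)] (hpq : p ≤ q) : Injective (linearMapOfLE 𝕜 E hpq) :=
  fun f g h => lp.ext <| by simpa using congrArg (fun x : lp E q => (x : ∀ i, E i)) h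

theorem norm_sum_single_one [DecidableEq α] {𝕜 : Type*} [NormedRing 𝕜] [NormOneClass 𝕜]
    (hp : 0 < p.toReal) (s : Finset α) :
    ‖∑ i ∈ s, lp.single p i (1 : 𝕜)‖ = (#s : ℝ) ^ (1 / p.toReal) := by
  have := lp.norm_sum_single hp (fun _ => (1 : 𝕜)) s
  simp only [norm_one, Real.one_rpow, sum_const, nsmul_eq_mul, mul_one] at this
  rw [← this, ← Real.rpow_mul (norm_nonneg' _), mul_one_div_cancel hp.ne', Real.rpow_one]

section RestrictFinset

variable (p) in
def restrictFinset (s : Finset α) : lp E p →+ PiLp p fun i : s => E i where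
  toFun y := WithLp.toLp p fun i => y i
  map_zero' := rfl
  map_add' _ _ := rfl

theorem norm_restrictFinset_rpow (hp : 0 < p.toReal) (s : Finset α) (y : lp E p) :
    ‖restrictFinset p s y‖ ^ p.toReal = ∑ i ∈ s, ‖y i‖ ^ p.toReal := by
  rw [PiLp.norm_eq_sum hp, ← Real.rpow_mul (by positivity), one_div, inv_mul_cancel₀ hp.ne',
    Real.rpow_one, ← sum_coe_sort s]
  rfl

theorem norm_restrictFinset_union_rpow [DecidableEq α] (hp : 0 < p.toReal) {s t : Finset α}
    (hst : Disjoint s t) (y : lp E p) :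
    ‖restrictFinset p (s ∪ t) y‖ ^ p.toReal =
      ‖restrictFinset p s y‖ ^ p.toReal + ‖restrictFinset p t y‖ ^ p.toReal := by
  simp only [norm_restrictFinset_rpow hp, sum_union hst]

theorem exists_norm_rpow_lt_norm_restrictFinset_rpow_add (hp : 0 < p.toReal) (y : lp E p)
    {ε : ℝ} (hε : 0 < ε) : ∃ F, ‖y‖ ^ p.toReal < ‖restrictFinset p F y‖ ^ p.toReal + ε := by
  simp only [norm_restrictFinset_rpow hp, ← sub_lt_iff_lt_add]
  exact ((hasSum_norm hp y).eventually (eventually_gt_nhds (sub_lt_self _ hε))).exists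

variable [Fact (1 ≤ p)]

theorem norm_restrictFinset_le (hp : 0 < p.toReal) (s : Finset α) (y : lp E p) :
    ‖restrictFinset p s y‖ ≤ ‖y‖ := by
  rw [← Real.rpow_le_rpow_iff (norm_nonneg _) (norm_nonneg _) hp, norm_restrictFinset_rpow hp]
  exact sum_rpow_le_norm_rpow hp y s

theorem norm_restrictFinset_mono (hp : 0 < p.toReal) {s t : Finset α} (hst : s ⊆ t)
    (y : lp E p) : ‖restrictFinset p s y‖ ≤ ‖restrictFinset p t y‖ := by
  rw [← Real.rpow_le_rpow_iff (norm_nonneg _) (norm_nonneg _) hp, norm_restrictFinset_rpow hp,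
    norm_restrictFinset_rpow hp]
  exact sum_le_sum_of_subset_of_nonneg hst fun _ _ _ => by positivity

theorem norm_restrictFinset_union_le [DecidableEq α] (hp : 0 < p.toReal) (s t : Finset α)
    (y : lp E p) :
    ‖restrictFinset p (s ∪ t) y‖ ≤ ‖restrictFinset p s y‖ + ‖restrictFinset p t y‖ := by
  refine Real.le_add_of_rpow_le_rpow_add_rpow (ENNReal.one_le_toReal_of_pos hp) (norm_nonneg _)
    (norm_nonneg _) (norm_nonneg _) ?_
  simp only [norm_restrictFinset_rpow hp]
  rw [← sum_union_inter]
  exact le_add_of_nonneg_right (sum_nonneg fun _ _ => by positivity)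

theorem norm_restrictFinset_le_of_disjoint [DecidableEq α] (hp : 0 < p.toReal) {y : lp E p}
    {F s : Finset α} {η : ℝ} (hη : 0 ≤ η)
    (hF : ‖y‖ ^ p.toReal ≤ ‖restrictFinset p F y‖ ^ p.toReal + η ^ p.toReal)
    (hs : Disjoint s F) : ‖restrictFinset p s y‖ ≤ η := by
  rw [← Real.rpow_le_rpow_iff (norm_nonneg _) hη hp]
  have := norm_restrictFinset_union_rpow hp hs y
  have := Real.rpow_le_rpow (norm_nonneg _) (norm_restrictFinset_le hp (s ∪ F) y) hp.le
  linarith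

theorem norm_le_norm_restrictFinset_add (hp : 0 < p.toReal) {y : lp E p} {F : Finset α} {η : ℝ}
    (hη : 0 ≤ η) (hF : ‖y‖ ^ p.toReal ≤ ‖restrictFinset p F y‖ ^ p.toReal + η ^ p.toReal) :
    ‖y‖ ≤ ‖restrictFinset p F y‖ + η :=
  Real.le_add_of_rpow_le_rpow_add_rpow (ENNReal.one_le_toReal_of_pos hp) (norm_nonneg _)
    (norm_nonneg _) hη hF

theorem card_rpow_mul_le_norm [DecidableEq α] {κ : Type*} (hp : 0 < p.toReal) {S : Finset κ}
    {D : κ → Finset α} (hD : (S : Set κ).PairwiseDisjoint D) {y : lp E p} {b : ℝ}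
    (hb : ∀ k ∈ S, b ≤ ‖restrictFinset p (D k) y‖) : (#S : ℝ) ^ (1 / p.toReal) * b ≤ ‖y‖ := by
  rcases le_or_gt b 0 with hb₀ | hb₀
  · exact (mul_nonpos_of_nonneg_of_nonpos (by positivity) hb₀).trans (norm_nonneg _)
  rw [← Real.rpow_le_rpow_iff (by positivity) (norm_nonneg _) hp, Real.mul_rpow (by positivity)
    hb₀.le, ← Real.rpow_mul (by positivity), one_div_mul_cancel hp.ne', Real.rpow_one]
  calc #S * b ^ p.toReal
      ≤ ∑ k ∈ S, ‖restrictFinset p (D k) y‖ ^ p.toReal := by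
        rw [← nsmul_eq_mul]
        exact card_nsmul_le_sum _ _ _ fun k hk => Real.rpow_le_rpow hb₀.le (hb k hk) hp.le
    _ = ∑ i ∈ S.biUnion D, ‖y i‖ ^ p.toReal := by
        rw [sum_biUnion hD]
        exact sum_congr rfl fun k _ => norm_restrictFinset_rpow hp _ _
    _ ≤ ‖y‖ ^ p.toReal := sum_rpow_le_norm_rpow hp y _

theorem card_mul_sub_le_norm_sum_of_norm_restrictFinset_sub_le [∀ i, NormedSpace ℝ (E i)]
    {κ : Type*} (hp : 0 < p.toReal) {S : Finset κ} {y : κ → lp E p} {R : Finset α} {a η : ℝ}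
    (ha : ∀ k ∈ S, a ≤ ‖restrictFinset p R (y k)‖)
    (hη : ∀ j ∈ S, ∀ k ∈ S, ‖restrictFinset p R (y j) - restrictFinset p R (y k)‖ ≤ η) :
    #S * (a - η) ≤ ‖∑ k ∈ S, y k‖ :=
  (card_mul_sub_le_norm_sum ha hη).trans <| by
    rw [← map_sum]
    exact norm_restrictFinset_le hp _ _

theorem card_rpow_mul_sub_le_norm_sum_of_disjoint [DecidableEq α] {κ : Type*} [DecidableEq κ]
    (hp : 0 < p.toReal) {S : Finset κ} {y : κ → lp E p} {D : κ → Finset α}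
    (hD : (S : Set κ).PairwiseDisjoint D) {a η : ℝ} (hη₀ : 0 ≤ η)
    (ha : ∀ k ∈ S, a ≤ ‖restrictFinset p (D k) (y k)‖)
    (hη : ∀ j ∈ S, ∀ k ∈ S, j ≠ k → ‖restrictFinset p (D k) (y j)‖ ≤ η) :
    (#S : ℝ) ^ (1 / p.toReal) * (a - #S * η) ≤ ‖∑ k ∈ S, y k‖ := by
  refine card_rpow_mul_le_norm hp hD fun k hk => ?_
  have hcross : ∑ j ∈ S.erase k, ‖restrictFinset p (D k) (y j)‖ ≤ #S * η := by
    refine (sum_le_card_nsmul _ _ η fun j hj => hη j (mem_of_mem_erase hj) k hk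
      (ne_of_mem_erase hj)).trans ?_
    rw [nsmul_eq_mul]
    exact mul_le_mul_of_nonneg_right (by exact_mod_cast card_erase_le) hη₀
  calc a - #S * η
      ≤ ‖restrictFinset p (D k) (y k)‖ - ∑ j ∈ S.erase k, ‖restrictFinset p (D k) (y j)‖ := by
        linarith [ha k hk]
    _ ≤ ‖∑ j ∈ S, restrictFinset p (D k) (y j)‖ :=
        norm_sub_sum_erase_le_norm_sum (fun j => restrictFinset p (D k) (y j)) hk
    _ = ‖restrictFinset p (D k) (∑ j ∈ S, y j)‖ := by rw [map_sum]

theorem exists_card_eq_rpow_mul_sub_le_norm_sum [DecidableEq α] [∀ i, NormedSpace ℝ (E i)]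
    (hp : 0 < p.toReal) {y : ℕ → lp E p} {R : Finset α} {D : ℕ → Finset α}
    (hD : Pairwise (Disjoint on D)) {a η : ℝ} (hη : 0 ≤ η)
    (hclose : ∀ j k, ‖restrictFinset p R (y j) - restrictFinset p R (y k)‖ ≤ η)
    (hcross : ∀ j k, j ≠ k → ‖restrictFinset p (D k) (y j)‖ ≤ η)
    (hbig : ∀ k, a ≤ ‖restrictFinset p R (y k)‖ ∨ a ≤ ‖restrictFinset p (D k) (y k)‖)
    (n : ℕ) (hn : n * η ≤ a) :
    ∃ S : Finset ℕ, #S = n ∧ (n : ℝ) ^ (1 / p.toReal) * (a - n * η) ≤ ‖∑ k ∈ S, y k‖ := by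
  by_cases hR : {k | a ≤ ‖restrictFinset p R (y k)‖}.Infinite
  · obtain ⟨S, hSR, rfl⟩ := hR.exists_subset_card_eq n
    refine ⟨S, rfl, le_trans ?_ (card_mul_sub_le_norm_sum_of_norm_restrictFinset_sub_le hp hSR
      fun j _ k _ => hclose j k)⟩
    rcases (#S).eq_zero_or_pos with hS | hS
    · simp [hS, Real.zero_rpow (inv_pos.2 hp).ne']
    have hS' : (1 : ℝ) ≤ #S := by exact_mod_cast hS
    calc (#S : ℝ) ^ (1 / p.toReal) * (a - #S * η) ≤ #S * (a - #S * η) :=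
          mul_le_mul_of_nonneg_right (Real.rpow_le_self_of_one_le hS'
            ((div_le_one hp).2 (ENNReal.one_le_toReal_of_pos hp))) (by linarith)
      _ ≤ #S * (a - η) := by gcongr; nlinarith
  · have hD' : {k | a ≤ ‖restrictFinset p (D k) (y k)‖}.Infinite :=
      (Set.not_infinite.1 hR).infinite_compl.mono fun k hk => (hbig k).resolve_left hk
    obtain ⟨S, hSD, rfl⟩ := hD'.exists_subset_card_eq n
    exact ⟨S, rfl, card_rpow_mul_sub_le_norm_sum_of_disjoint hp (hD.set_pairwise _) hη hSD
      fun j _ k _ hjk => hcross j k hjk⟩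

theorem exists_pos_forall_card_eq_mul_rpow_le_norm_sum {𝕜 : Type*} [RCLike 𝕜] {ι : Type*}
    [Uncountable ι] (hp : 0 < p.toReal) (g : ι → lp (fun _ : α => 𝕜) p) (hg : ∀ i, g i ≠ 0) :
    ∃ c > 0, ∀ n : ℕ, ∃ s : Finset ι, #s = n ∧ c * (n : ℝ) ^ (1 / p.toReal) ≤ ‖∑ i ∈ s, g i‖ := by
  classical
  obtain ⟨A, hA, δ, hδ, M, hgA⟩ := exists_not_countable_forall_mem_Icc (fun i => ‖g i‖)
    fun i => norm_pos_iff.2 (hg i)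
  refine ⟨δ / 4, by positivity, fun n => ?_⟩
  -- small enough that `δ / 3 - n * η ≥ δ / 4`
  set η := δ / (12 * (n + 1))
  have hη : 0 < η := by positivity
  have hnη : (n + 1) * η = δ / 12 := by
    simp only [η]
    field_simp
  have hnη₀ : 0 ≤ n * η := by positivity
  choose F hF using fun i => exists_norm_rpow_lt_norm_restrictFinset_rpow_add hp (g i)
    (Real.rpow_pos_of_pos hη p.toReal)
  obtain ⟨m, hm⟩ := exists_not_countable_inter_preimage_singleton hA fun i => #(F i)
  obtain ⟨R, c, hc, hcA, hdisj⟩ := exists_seq_pairwise_disjoint_sdiff m hm F fun i hi => hi.2.le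
  obtain ⟨φ, hφ, hclose⟩ := exists_strictMono_forall_dist_le
    (Metric.isBounded_closedBall (x := 0) (r := M)) (u := fun k => restrictFinset p R (g (c k)))
    (fun k => mem_closedBall_zero_iff.2 <|
      (norm_restrictFinset_le hp _ _).trans (hgA _ (hcA k).1).2) hη
  set σ := c ∘ φ
  have hσ : Injective σ := hc.comp hφ.injective
  have hσA : ∀ k, σ k ∈ A := fun k => (hcA (φ k)).1
  have hcross : ∀ j k, j ≠ k → ‖restrictFinset p (F (σ k) \ R) (g (σ j))‖ ≤ η := fun j k hjk =>
    norm_restrictFinset_le_of_disjoint hp hη.le (hF (σ j)).le <| disjoint_left.2 fun x hxk hxj =>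
      disjoint_left.1 (hdisj (hφ.injective.ne hjk.symm)) hxk
        (mem_sdiff.2 ⟨hxj, (mem_sdiff.1 hxk).2⟩)
  have hbig : ∀ k, δ / 3 ≤ ‖restrictFinset p R (g (σ k))‖ ∨
      δ / 3 ≤ ‖restrictFinset p (F (σ k) \ R) (g (σ k))‖ := fun k => by
    by_contra! h
    have hsub : F (σ k) ⊆ R ∪ (F (σ k) \ R) := by
      rw [union_sdiff_self_eq_union]
      exact subset_union_right
    have hgF := norm_le_norm_restrictFinset_add hp hη.le (hF (σ k)).le
    have hFR := norm_restrictFinset_mono hp hsub (g (σ k))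
    have hRD := norm_restrictFinset_union_le hp R (F (σ k) \ R) (g (σ k))
    linarith [h.1, h.2, (hgA _ (hσA k)).1]
  obtain ⟨S, hS, hsum⟩ := exists_card_eq_rpow_mul_sub_le_norm_sum hp (y := g ∘ σ)
    (hdisj.comp_of_injective hφ.injective) hη.le
    (fun j k => by rw [← dist_eq_norm]; exact hclose j k)
    hcross hbig n (by linarith)
  refine ⟨S.image σ, by rw [card_image_of_injective _ hσ, hS], ?_⟩
  rw [sum_image hσ.injOn]
  have := Real.rpow_nonneg (n.cast_nonneg (α := ℝ)) (1 / p.toReal)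
  exact le_trans (by nlinarith) hsum

end RestrictFinset

theorem not_injective_of_exponent_lt {𝕜 : Type*} [RCLike 𝕜] [Uncountable α] [Fact (1 ≤ p)]
    [Fact (1 ≤ q)] (hp : p ≠ ∞) (hq : q ≠ ∞) (hqp : q < p)
    (T : lp (fun _ : α => 𝕜) p →L[𝕜] lp (fun _ : α => 𝕜) q) : ¬Injective T := by
  classical
  intro hT
  have hp₀ : 0 < p.toReal := ENNReal.toReal_pos (zero_lt_one.trans_le Fact.out).ne' hp
  have hq₀ : 0 < q.toReal := ENNReal.toReal_pos (zero_lt_one.trans_le Fact.out).ne' hq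
  obtain ⟨c, hc, hsum⟩ := exists_pos_forall_card_eq_mul_rpow_le_norm_sum hq₀
    (fun i => T (lp.single p i (1 : 𝕜))) fun i => (map_ne_zero_iff T hT).2 fun h => by
      simpa using congrArg (fun x : lp (fun _ : α => 𝕜) p => x i) h
  refine not_forall_mul_rpow_le_mul_rpow (C := ‖T‖) hc
    (one_div_lt_one_div_of_lt hq₀ (ENNReal.toReal_strict_mono hp hqp)) fun n => ?_
  obtain ⟨s, rfl, hs⟩ := hsum n
  calc c * (#s : ℝ) ^ (1 / q.toReal) ≤ ‖T (∑ i ∈ s, lp.single p i (1 : 𝕜))‖ := by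
        rwa [map_sum]
    _ ≤ ‖T‖ * (#s : ℝ) ^ (1 / p.toReal) := by
        rw [← norm_sum_single_one (𝕜 := 𝕜) hp₀]
        exact T.le_opNorm _

end lp

/-- For an uncountable set `Γ` and `p, q ∈ [1, ∞)`, there is a bounded linear injection
`ℓ_p(Γ) → ℓ_q(Γ)` if and only if `p ≤ q`. -/
theorem stmt17 {𝕜 : Type*} [RCLike 𝕜] {Γ : Type*} [Uncountable Γ]
    (p q : ℝ≥0∞) [Fact (1 ≤ p)] [Fact (1 ≤ q)] (hp : p ≠ ∞) (hq : q ≠ ∞) :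
    (∃ f : lp (fun _ : Γ => 𝕜) p →L[𝕜] lp (fun _ : Γ => 𝕜) q, Function.Injective f) ↔
      p ≤ q := by
  refine ⟨fun ⟨T, hT⟩ => le_of_not_gt fun hqp => lp.not_injective_of_exponent_lt hp hq hqp T hT,
    fun hpq => ?_⟩
  have hp₀ : 0 < p.toReal := ENNReal.toReal_pos (zero_lt_one.trans_le Fact.out).ne' hp
  exact ⟨(lp.linearMapOfLE 𝕜 _ hpq).mkContinuous 1 fun f => by
    simpa using lp.norm_linearMapOfLE_le hp₀ hq hpq f, lp.linearMapOfLE_injective hpq⟩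
end

section
/- Let T: X → Y be a bounded operator between Banach spaces with separable image, where Y is an Asplund space. Then the adjoint T*: Y* → X* has separable image. -/
open NormedSpace TopologicalSpace

/-!
The adjoint of `T` factors through the dual of `Z = closure (range T)`: every `f ∈ Y*` gives
`T* f = (T₀)* (f|_Z)`, where `T₀ : X → Z` is the corestriction of `T`. Since `Z` is a closed
separable subspace of the Asplund space `Y`, `Z*` is separable, hence so is its continuous
image under `(T₀)*`.
-/

namespace ContinuousLinearMap

variable {𝕜 : Type*} [NontriviallyNormedField 𝕜] {X Y : Type*}
  [NormedAddCommGroup X] [NormedSpace 𝕜 X] [NormedAddCommGroup Y] [NormedSpace 𝕜 Y]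

theorem isSeparable_range_flip_compL [SeparableSpace (StrongDual 𝕜 Y)] (T : X →L[𝕜] Y) :
    IsSeparable (Set.range ((compL 𝕜 X Y 𝕜).flip T)) :=
  isSeparable_range ((compL 𝕜 X Y 𝕜).flip T).continuous

theorem range_flip_compL_subset_codRestrict (T : X →L[𝕜] Y) (Z : Submodule 𝕜 Y)
    (hTZ : ∀ x, T x ∈ Z) :
    Set.range ((compL 𝕜 X Y 𝕜).flip T) ⊆
      Set.range ((compL 𝕜 X Z 𝕜).flip (T.codRestrict Z hTZ)) := by
  rintro _ ⟨f, rfl⟩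
  exact ⟨f.comp Z.subtypeL, rfl⟩

theorem isSeparable_topologicalClosure_range (T : X →L[𝕜] Y) (hT : IsSeparable (Set.range T)) :
    IsSeparable ((LinearMap.range (T : X →ₗ[𝕜] Y)).topologicalClosure : Set Y) := by
  rw [Submodule.topologicalClosure_coe]
  exact hT.closure

end ContinuousLinearMap

theorem stmt19_general {𝕜 : Type*} [RCLike 𝕜] {X Y : Type*}
    [NormedAddCommGroup X] [NormedSpace 𝕜 X]
    [NormedAddCommGroup Y] [NormedSpace 𝕜 Y]
    (hAsplund : ∀ Z : Submodule 𝕜 Y, IsClosed (Z : Set Y) →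
      IsSeparable (Z : Set Y) → SeparableSpace (StrongDual 𝕜 Z))
    (T : X →L[𝕜] Y) (hT : IsSeparable (Set.range T)) :
    IsSeparable (Set.range ((ContinuousLinearMap.compL 𝕜 X Y 𝕜).flip T)) := by
  set Z := (LinearMap.range (T : X →ₗ[𝕜] Y)).topologicalClosure
  have : SeparableSpace (StrongDual 𝕜 Z) :=
    hAsplund Z (Submodule.isClosed_topologicalClosure _) (T.isSeparable_topologicalClosure_range hT)
  have hTZ : ∀ x, T x ∈ Z := fun x =>
    Submodule.le_topologicalClosure _ (LinearMap.mem_range_self _ x)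
  exact (T.codRestrict Z hTZ).isSeparable_range_flip_compL.mono
    (T.range_flip_compL_subset_codRestrict Z hTZ)

/-- If `T : X → Y` is a bounded operator with separable image into an Asplund space `Y`
(every separable closed subspace of `Y` has separable dual), then the Banach-space adjoint
`T* : Y* → X*`, `T* f = f ∘ T`, has separable image. -/
theorem stmt19 {𝕜 : Type*} [RCLike 𝕜] {X Y : Type*}
    [NormedAddCommGroup X] [NormedSpace 𝕜 X] [CompleteSpace X]
    [NormedAddCommGroup Y] [NormedSpace 𝕜 Y] [CompleteSpace Y]
    (hAsplund : ∀ Z : Submodule 𝕜 Y, IsClosed (Z : Set Y) →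
      IsSeparable (Z : Set Y) → SeparableSpace (StrongDual 𝕜 Z))
    (T : X →L[𝕜] Y) (hT : IsSeparable (Set.range T)) :
    IsSeparable (Set.range ((ContinuousLinearMap.compL 𝕜 X Y 𝕜).flip T)) :=
  stmt19_general hAsplund T hT
end
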